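/- Let (X,ρ) be a metric space and let A ⊆ X be σ-lower porous. Then A can be covered by a countable family of closed lower porous sets, i.e., there exist closed sets F_n ⊆ X (n ∈ ℕ), each lower porous, with A ⊆ ⋃_{n∈ℕ} F_n. -/
import Mathlib


open Metric Filter Set

/-- γ(x,R,M): the supremum of radii r>0 of open balls contained in B(x,R) \ M
(equal to 0 if no such ball exists, by `Real.sSup_empty`). -/
noncomputable def porGamma {X : Type*} [MetricSpace X] (x : X) (R : ℝ) (M : Set X) : ℝ :=
  sSup {r : ℝ | 0 < r ∧ ∃ z : X, Metric.ball z r ⊆ Metric.ball x R \ M}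

/-- `M` is lower porous at `x`: liminf_{R→0+} 2γ(x,R,M)/R > 0. -/
def LowerPorousAt {X : Type*} [MetricSpace X] (M : Set X) (x : X) : Prop :=
  0 < Filter.liminf (fun R => 2 * porGamma x R M / R) (nhdsWithin 0 (Set.Ioi 0))

/-- `M` is (upper) porous at `x`: limsup_{R→0+} 2γ(x,R,M)/R > 0. -/
def UpperPorousAt {X : Type*} [MetricSpace X] (M : Set X) (x : X) : Prop :=
  0 < Filter.limsup (fun R => 2 * porGamma x R M / R) (nhdsWithin 0 (Set.Ioi 0))

/-- A set is lower porous if it is lower porous at each of its points. -/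
def LowerPorous {X : Type*} [MetricSpace X] (M : Set X) : Prop :=
  ∀ x ∈ M, LowerPorousAt M x

/-- A set is (upper) porous if it is porous at each of its points. -/
def UpperPorous {X : Type*} [MetricSpace X] (M : Set X) : Prop :=
  ∀ x ∈ M, UpperPorousAt M x

/-- A set is σ-lower porous if it is a countable union of lower porous sets. -/
def SigmaLowerPorous {X : Type*} [MetricSpace X] (A : Set X) : Prop :=
  ∃ f : ℕ → Set X, (∀ n, LowerPorous (f n)) ∧ A = ⋃ n, f n

/-- A set is σ-(upper) porous if it is a countable union of porous sets. -/
def SigmaUpperPorous {X : Type*} [MetricSpace X] (A : Set X) : Prop :=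
  ∃ f : ℕ → Set X, (∀ n, UpperPorous (f n)) ∧ A = ⋃ n, f n

section aux
variable {X : Type*} [MetricSpace X] {M F : Set X} {x y z : X} {R r : ℝ}

lemma porGamma_nonneg (x : X) (R : ℝ) (M : Set X) : 0 ≤ porGamma x R M :=
  Real.sSup_nonneg fun _ hr => hr.1.le

/-- An open ball disjoint from `M` is disjoint from `closure M`. -/
lemma ball_disj_closure (h : Metric.ball z r ∩ M = ∅) (w : X) (hw : w ∈ Metric.ball z r) :
    w ∉ closure M := by
  intro hcl
  obtain ⟨b, hbM, hb⟩ := Metric.mem_closure_iff.1 hcl (r - dist w z) (by simp [Metric.mem_ball] at hw; linarith)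
  have : b ∈ Metric.ball z r := by
    simp only [Metric.mem_ball] at hw ⊢
    calc dist b z ≤ dist b w + dist w z := dist_triangle _ _ _
    _ < (r - dist w z) + dist w z := by rw [dist_comm b w]; linarith
    _ = r := by ring
  exact (Set.eq_empty_iff_forall_notMem.1 h b) ⟨this, hbM⟩

lemma porSet_mem_le (hx : x ∈ closure M) (hr : 0 < r)
    (hz : Metric.ball z r ⊆ Metric.ball x R \ M) : r ≤ R := by
  have hzx : z ∈ Metric.ball x R := (hz (mem_ball_self hr)).1
  have hdisj : Metric.ball z r ∩ M = ∅ :=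
    Set.eq_empty_iff_forall_notMem.2 fun w ⟨hw1, hw2⟩ => (hz hw1).2 hw2
  have hxz : x ∉ Metric.ball z r := fun hmem => ball_disj_closure hdisj x hmem hx
  simp only [Metric.mem_ball, not_lt] at hxz hzx
  calc r ≤ dist x z := hxz
  _ = dist z x := dist_comm _ _
  _ ≤ R := hzx.le

lemma porGamma_le_radius (hx : x ∈ closure M) (hR : 0 ≤ R) : porGamma x R M ≤ R :=
  Real.sSup_le (fun _ ⟨hr, _, hz⟩ => porSet_mem_le hx hr hz) hR

lemma porGamma_mono_center (hx : x ∈ closure M) (hR : 0 ≤ R) (hy : dist x y < R / 2) :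
    porGamma y (R / 2) M ≤ porGamma x R M := by
  apply Real.sSup_le _ (porGamma_nonneg _ _ _)
  rintro r ⟨hr, z, hz⟩
  apply le_csSup ⟨R, fun s hs => porSet_mem_le hx hs.1 hs.2.choose_spec⟩
  refine ⟨hr, z, fun w hw => ?_⟩
  obtain ⟨hw1, hw2⟩ := hz hw
  refine ⟨?_, hw2⟩
  simp only [Metric.mem_ball] at hw1 ⊢
  calc dist w x ≤ dist w y + dist y x := dist_triangle _ _ _
  _ < R / 2 + R / 2 := by rw [dist_comm y x]; linarith
  _ = R := by ring

lemma porGamma_mono_set (hF : F ⊆ closure M) (hx : x ∈ F) :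
    porGamma x R M ≤ porGamma x R F := by
  apply Real.sSup_le _ (porGamma_nonneg _ _ _)
  rintro r ⟨hr, z, hz⟩
  apply le_csSup ⟨R, fun s hs => porSet_mem_le (subset_closure hx) hs.1 hs.2.choose_spec⟩
  have hdisj : Metric.ball z r ∩ M = ∅ :=
    Set.eq_empty_iff_forall_notMem.2 fun w ⟨hw1, hw2⟩ => (hz hw1).2 hw2
  exact ⟨hr, z, fun w hw => ⟨(hz hw).1, fun hwF => ball_disj_closure hdisj w hw (hF hwF)⟩⟩

/-- The uniform pieces of a lower porous set. -/
def PorPiece (M : Set X) (n k : ℕ) : Set X :=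
  {x | x ∈ M ∧ ∀ R : ℝ, 0 < R → R < 1 / (k + 1) → R / (2 * (n + 1)) ≤ porGamma x R M}

lemma lowerPorous_closure_porPiece (M : Set X) (n k : ℕ) :
    LowerPorous (closure (PorPiece M n k)) := by
  intro x hx
  have hxM : x ∈ closure M := closure_mono (fun y hy => hy.1) hx
  have hδ : (0:ℝ) < 1 / (k + 1) := by positivity
  have key : ∀ R : ℝ, 0 < R → R < 1 / (k + 1) →
      (1 : ℝ) / (2 * (n + 1)) ≤ 2 * porGamma x R (closure (PorPiece M n k)) / R := by
    intro R hR hRk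
    obtain ⟨y, hyP, hxy⟩ := Metric.mem_closure_iff.1 hx (R / 2) (by linarith)
    have h1 : R / 2 / (2 * (n + 1)) ≤ porGamma y (R / 2) M :=
      hyP.2 (R / 2) (by linarith) (by linarith)
    have h2 : porGamma y (R / 2) M ≤ porGamma x R M :=
      porGamma_mono_center hxM hR.le hxy
    have h3 : porGamma x R M ≤ porGamma x R (closure (PorPiece M n k)) :=
      porGamma_mono_set (closure_mono (fun y hy => hy.1)) hx
    have hn : (0:ℝ) < 2 * (n + 1) := by positivity
    rw [div_le_iff₀ hn] at h1
    rw [div_le_div_iff₀ hn hR]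
    nlinarith [h1, h2, h3]
  have hev : ∀ᶠ R in nhdsWithin (0:ℝ) (Set.Ioi 0),
      (1 : ℝ) / (2 * (n + 1)) ≤ 2 * porGamma x R (closure (PorPiece M n k)) / R := by
    filter_upwards [Ioo_mem_nhdsGT_of_mem (Set.mem_Ico.2 ⟨le_refl 0, hδ⟩)] with R hR
    exact key R hR.1 hR.2
  have hbdd : ∀ᶠ R in nhdsWithin (0:ℝ) (Set.Ioi 0),
      2 * porGamma x R (closure (PorPiece M n k)) / R ≤ 2 := by
    filter_upwards [self_mem_nhdsWithin] with R hR
    have hR : (0:ℝ) < R := hR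
    have := porGamma_le_radius (M := closure (PorPiece M n k))
      (by rwa [closure_closure]) hR.le
    rw [div_le_iff₀ hR]
    linarith
  have hcob : (nhdsWithin (0:ℝ) (Set.Ioi 0)).IsCoboundedUnder (· ≥ ·)
      (fun R => 2 * porGamma x R (closure (PorPiece M n k)) / R) :=
    IsBoundedUnder.isCoboundedUnder_ge ⟨2, hbdd⟩
  have := le_liminf_of_le hcob hev
  unfold LowerPorousAt
  calc (0:ℝ) < 1 / (2 * (n + 1)) := by positivity
  _ ≤ _ := this

lemma mem_porPiece_of_lowerPorousAt (hM : LowerPorousAt M x) (hxM : x ∈ M) :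
    ∃ n k : ℕ, x ∈ PorPiece M n k := by
  unfold LowerPorousAt at hM
  set L := Filter.liminf (fun R => 2 * porGamma x R M / R) (nhdsWithin 0 (Set.Ioi 0)) with hL
  have hbd : (nhdsWithin (0:ℝ) (Set.Ioi 0)).IsBoundedUnder (· ≥ ·)
      (fun R => 2 * porGamma x R M / R) := by
    have h0 : ∀ᶠ R in nhdsWithin (0:ℝ) (Set.Ioi 0), (0:ℝ) ≤ 2 * porGamma x R M / R := by
      filter_upwards [self_mem_nhdsWithin] with R hR
      have hR : (0:ℝ) < R := hR
      exact div_nonneg (mul_nonneg two_pos.le (porGamma_nonneg x R M)) hR.le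
    exact ⟨0, h0⟩
  have hev : ∀ᶠ R in nhdsWithin (0:ℝ) (Set.Ioi 0), L / 2 < 2 * porGamma x R M / R :=
    eventually_lt_of_lt_liminf (by linarith) hbd
  obtain ⟨s, hs, hss⟩ := Filter.eventually_iff_exists_mem.1 hev
  obtain ⟨δ, hδ, hδs⟩ := mem_nhdsGT_iff_exists_Ioo_subset.1 hs
  obtain ⟨n, hn⟩ := exists_nat_gt (4 / L)
  obtain ⟨k, hk⟩ := exists_nat_gt (1 / δ)
  have hδ0 : (0:ℝ) < δ := hδ
  refine ⟨n, k, hxM, fun R hR hRk => ?_⟩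
  have hRδ : R < δ := lt_of_lt_of_le hRk (by
    rw [div_le_iff₀ (by positivity)]
    have : 1 / δ < k + 1 := by linarith
    rw [div_lt_iff₀ hδ0] at this
    linarith)
  have h2 := hss R (hδs ⟨hR, hRδ⟩)
  have hn1 : (4:ℝ) / L < n + 1 := by linarith
  have hn0 : (0:ℝ) < (n:ℝ) + 1 := by positivity
  have hL4 : 1 / (n + 1 : ℝ) < L / 2 := by
    rw [div_lt_div_iff₀ hn0 two_pos]
    rw [div_lt_iff₀ hM] at hn1
    linarith
  have h3 : 1 / (n + 1 : ℝ) < 2 * porGamma x R M / R := lt_trans hL4 h2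
  rw [div_lt_div_iff₀ hn0 hR] at h3
  rw [div_le_iff₀ (by positivity : (0:ℝ) < 2 * (n + 1))]
  nlinarith [h3]


end aux

/-- A σ-lower porous set can be covered by countably many closed lower porous sets. -/
theorem sigmaLowerPorous_covered_by_closed_lowerPorous {X : Type*} [MetricSpace X]
    (A : Set X) (hA : SigmaLowerPorous A) :
    ∃ F : ℕ → Set X, (∀ n, IsClosed (F n) ∧ LowerPorous (F n)) ∧ A ⊆ ⋃ n, F n := by
  obtain ⟨f, hf, hAeq⟩ := hA
  let e : ℕ ≃ ℕ × ℕ × ℕ := (Denumerable.eqv (ℕ × ℕ × ℕ)).symm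
  refine ⟨fun m => closure (PorPiece (f (e m).1) (e m).2.1 (e m).2.2),
    fun m => ⟨isClosed_closure, lowerPorous_closure_porPiece _ _ _⟩, fun x hx => ?_⟩
  rw [hAeq] at hx
  obtain ⟨_, ⟨m, rfl⟩, hxm⟩ := hx
  obtain ⟨n, k, hnk⟩ := mem_porPiece_of_lowerPorousAt (hf m x hxm) hxm
  refine Set.mem_iUnion.2 ⟨e.symm (m, n, k), ?_⟩
  have he : e (e.symm (m, n, k)) = (m, n, k) := e.apply_symm_apply _
  rw [he]
  exact subset_closure hnk
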